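/- Let $[a_1,a_2]$ and $[b_1,b_2]$ be subintervals of $[0,1]$ with $a_1 < a_2 < b_1 < b_2$ satisfying $a_1 + b_2 = 1$ and $a_2 + b_1 = 1$. Then for any $a \in [a_1,a_2]$ and $b \in [b_1,b_2]$, the normalized values satisfy $a/(a+b) \in [a_1,a_2]$ and $b/(a+b) \in [b_1,b_2]$. -/
import Mathlib

/-- SLHS normalization lemma: normalized samples stay in their paired subintervals. -/
theorem stmt0 (a₁ a₂ b₁ b₂ a b : ℝ)
    (h0 : 0 ≤ a₁) (h1 : b₂ ≤ 1)
    (h12 : a₁ < a₂) (h23 : a₂ < b₁) (h34 : b₁ < b₂)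
    (hs1 : a₁ + b₂ = 1) (hs2 : a₂ + b₁ = 1)
    (ha : a ∈ Set.Icc a₁ a₂) (hb : b ∈ Set.Icc b₁ b₂) :
    a / (a + b) ∈ Set.Icc a₁ a₂ ∧ b / (a + b) ∈ Set.Icc b₁ b₂ := by
  obtain ⟨ha1, ha2⟩ := ha
  obtain ⟨hb1, hb2⟩ := hb
  have hab : 0 < a + b := by nlinarith
  refine ⟨⟨?_, ?_⟩, ?_, ?_⟩
  · rw [le_div_iff₀ hab]; nlinarith
  · rw [div_le_iff₀ hab]; nlinarith
  · rw [le_div_iff₀ hab]; nlinarith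
  · rw [div_le_iff₀ hab]; nlinarith
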